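/- arXiv:1705.07176 — 2 statements merged into one kernel-verified Lean document; each statement's English description precedes it below -/
import Mathlib

section
/- Let σ ∈ (0,1), L > 0, and 0 < ηL < 1, and let G(η) be the 3×3 real matrix with rows (σ, 0, η), (σ, σ, 2η), (L, 2L, σ+2ηL). Then: (1) the spectral radius θ(η) = ρ(G(η)) satisfies σ < θ(η) < σ + 4(ηL)^{1/3}; and (2) for any vector χ = (χ₁, χ₂, χ₃) with nonnegative entries, χ₃ = 1, and G(η)χ = θ(η)χ, one has χ₂ ≤ 2η^{1/3}/L^{2/3}. -/
/-!
Put `x = z - σ` and `ε = η L`. Expanding the determinant, `z` is an eigenvalue of `G(η)` iff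
`x³ = 2ε x² + 5ε x + 2σε`. With `m = ε^{1/3} < 1`, the triangle inequality bounds the modulus
of the right-hand side by `(2 + 5/4 + 1/8) m |x|² < |x|³` as soon as `|x| ≥ 4m`, so every root
has `|x| < 4m`, while the intermediate value theorem yields a real root `x ∈ (0, 4m)`; this
gives `σ < θ < σ + 4m`. The third row of `G χ = θ χ` reads
`L χ₁ + 2L χ₂ + σ + 2ηL = θ`, hence `2L χ₂ < 4m`.
-/

/-- Spectral radius of a real 3×3 matrix: the largest modulus of its complex eigenvalues. -/
noncomputable def specRad (M : Matrix (Fin 3) (Fin 3) ℝ) : ℝ :=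
  sSup ((fun z : ℂ => ‖z‖) '' spectrum ℂ (M.map Complex.ofReal))

theorem norm_le_specRad {M : Matrix (Fin 3) (Fin 3) ℝ} {z : ℂ}
    (hz : z ∈ spectrum ℂ (M.map Complex.ofReal)) : ‖z‖ ≤ specRad M :=
  le_csSup (((Matrix.finite_spectrum _).image _).bddAbove) ⟨z, hz, rfl⟩

theorem exists_norm_eq_specRad {M : Matrix (Fin 3) (Fin 3) ℝ}
    (h : (spectrum ℂ (M.map Complex.ofReal)).Nonempty) :
    ∃ z ∈ spectrum ℂ (M.map Complex.ofReal), ‖z‖ = specRad M :=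
  (h.image _).csSup_mem ((Matrix.finite_spectrum _).image _)

theorem lt_four_mul_of_cubic_le {m σ s : ℝ} (hm0 : 0 < m) (hm1 : m < 1) (hσ : σ < 1)
    (hs : 0 ≤ s) (h : s ^ 3 ≤ 2 * m ^ 3 * s ^ 2 + 5 * m ^ 3 * s + 2 * σ * m ^ 3) :
    s < 4 * m := by
  by_contra! hs4
  have hs0 : 0 < s := by linarith
  have hms : 0 < m * s ^ 2 := by positivity
  have hm2 : m ^ 2 ≤ m := by nlinarith
  have h1 : 2 * m ^ 3 * s ^ 2 ≤ 2 * m * s ^ 2 := by nlinarith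
  have h2 : 5 * m ^ 3 * s ≤ 5 / 4 * m * s ^ 2 := by
    nlinarith [mul_le_mul_of_nonneg_left hs4 (by positivity : 0 ≤ m ^ 2 * s)]
  have h3 : 2 * σ * m ^ 3 < 1 / 8 * m * s ^ 2 := by
    nlinarith [pow_pos hm0 3, mul_le_mul hs4 hs4 (by positivity) hs]
  nlinarith

theorem norm_lt_four_mul_of_cubic_eq {m σ : ℝ} {w : ℂ} (hm0 : 0 < m) (hm1 : m < 1)
    (hσ0 : 0 ≤ σ) (hσ1 : σ < 1)
    (h : w ^ 3 = 2 * (m : ℂ) ^ 3 * w ^ 2 + 5 * (m : ℂ) ^ 3 * w + 2 * σ * (m : ℂ) ^ 3) :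
    ‖w‖ < 4 * m := by
  refine lt_four_mul_of_cubic_le hm0 hm1 hσ1 (norm_nonneg w) ?_
  calc ‖w‖ ^ 3 = ‖w ^ 3‖ := (norm_pow w 3).symm
    _ ≤ ‖2 * (m : ℂ) ^ 3 * w ^ 2‖ + ‖5 * (m : ℂ) ^ 3 * w‖ + ‖2 * (σ : ℂ) * (m : ℂ) ^ 3‖ := by
      rw [h]; exact norm_add₃_le
    _ = 2 * m ^ 3 * ‖w‖ ^ 2 + 5 * m ^ 3 * ‖w‖ + 2 * σ * m ^ 3 := by
      simp [abs_of_pos hm0, abs_of_nonneg hσ0]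

theorem exists_cubic_root_mem_Ioo {m σ : ℝ} (hm0 : 0 < m) (hm1 : m < 1) (hσ0 : 0 < σ)
    (hσ1 : σ < 1) :
    ∃ a ∈ Set.Ioo 0 (4 * m), a ^ 3 = 2 * m ^ 3 * a ^ 2 + 5 * m ^ 3 * a + 2 * σ * m ^ 3 := by
  set p : ℝ → ℝ := fun a => a ^ 3 - (2 * m ^ 3 * a ^ 2 + 5 * m ^ 3 * a + 2 * σ * m ^ 3)
  have hp0 : p 0 < 0 := by simp only [p]; nlinarith [pow_pos hm0 3]
  have hp4m : 0 < p (4 * m) := by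
    by_contra! h
    exact (lt_four_mul_of_cubic_le hm0 hm1 hσ1 (by positivity) (sub_nonpos.mp h)).false
  obtain ⟨a, ha, hpa⟩ := intermediate_value_Ioo (by positivity : 0 ≤ 4 * m)
    (by fun_prop : Continuous p).continuousOn ⟨hp0, hp4m⟩
  exact ⟨a, ha, sub_eq_zero.mp hpa⟩

def accMatrix (σ L η : ℝ) : Matrix (Fin 3) (Fin 3) ℝ :=
  !![σ, 0, η; σ, σ, 2 * η; L, 2 * L, σ + 2 * η * L]

theorem mem_spectrum_accMatrix_iff (σ L η : ℝ) (z : ℂ) :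
    z ∈ spectrum ℂ ((accMatrix σ L η).map Complex.ofReal) ↔
      (z - σ) ^ 3 = 2 * (η * L : ℂ) * (z - σ) ^ 2 + 5 * (η * L : ℂ) * (z - σ)
        + 2 * σ * (η * L : ℂ) := by
  have hM : algebraMap ℂ (Matrix (Fin 3) (Fin 3) ℂ) z - (accMatrix σ L η).map Complex.ofReal
      = !![z - σ, 0, -η; -σ, z - σ, -(2 * η); -L, -(2 * L), z - (σ + 2 * η * L)] := by
    ext i j
    fin_cases i <;> fin_cases j <;> simp [accMatrix, Matrix.algebraMap_matrix_apply]
  rw [spectrum.mem_iff, Matrix.isUnit_iff_isUnit_det, isUnit_iff_ne_zero, not_not, hM,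
    Matrix.det_fin_three]
  simp only [Matrix.of_apply, Matrix.cons_val', Matrix.cons_val_zero, Matrix.cons_val_one,
    Matrix.cons_val_two, Matrix.empty_val', Matrix.cons_val_fin_one, Matrix.head_cons,
    Matrix.tail_cons, Matrix.head_fin_const]
  constructor <;> intro h <;> linear_combination h

theorem specRad_accMatrix_mem_Ioo {σ L η : ℝ} (hσ0 : 0 < σ) (hσ1 : σ < 1) (hL : 0 < L)
    (hη0 : 0 < η) (hηL : η * L < 1) :
    σ < specRad (accMatrix σ L η) ∧
      specRad (accMatrix σ L η) < σ + 4 * (η * L) ^ ((1 : ℝ) / 3) := by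
  have hηL0 : 0 < η * L := mul_pos hη0 hL
  set m := (η * L) ^ ((1 : ℝ) / 3)
  have hm0 : 0 < m := Real.rpow_pos_of_pos hηL0 _
  have hm1 : m < 1 := Real.rpow_lt_one hηL0.le hηL (by norm_num)
  have hm3 : (m : ℂ) ^ 3 = η * L := by
    have : m ^ 3 = η * L := by
      simp only [m, one_div]; exact Real.rpow_inv_natCast_pow hηL0.le three_ne_zero
    exact_mod_cast this
  have hspec (z : ℂ) : z ∈ spectrum ℂ ((accMatrix σ L η).map Complex.ofReal) ↔
      (z - σ) ^ 3 = 2 * (m : ℂ) ^ 3 * (z - σ) ^ 2 + 5 * (m : ℂ) ^ 3 * (z - σ)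
        + 2 * σ * (m : ℂ) ^ 3 := by
    rw [mem_spectrum_accMatrix_iff, hm3]
  obtain ⟨a, ⟨ha0, -⟩, ha⟩ := exists_cubic_root_mem_Ioo hm0 hm1 hσ0 hσ1
  have hroot : ((σ + a : ℝ) : ℂ) ∈ spectrum ℂ ((accMatrix σ L η).map Complex.ofReal) := by
    rw [hspec]
    push_cast
    simpa using congrArg Complex.ofReal ha
  constructor
  · have := norm_le_specRad hroot
    rw [Complex.norm_real, Real.norm_of_nonneg (by positivity)] at this
    linarith
  · obtain ⟨z, hz, hz_norm⟩ := exists_norm_eq_specRad ⟨_, hroot⟩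
    have hzσ := norm_lt_four_mul_of_cubic_eq hm0 hm1 hσ0.le hσ1 ((hspec z).mp hz)
    calc specRad (accMatrix σ L η) = ‖(σ : ℂ) + (z - σ)‖ := by rw [add_sub_cancel, hz_norm]
      _ ≤ σ + ‖z - σ‖ := by simpa [abs_of_pos hσ0] using norm_add_le (σ : ℂ) (z - σ)
      _ < σ + 4 * m := by linarith

theorem mul_rpow_one_third_eq {η L : ℝ} (hη : 0 ≤ η) (hL : 0 < L) :
    (η * L) ^ ((1 : ℝ) / 3) = L * (η ^ ((1 : ℝ) / 3) / L ^ ((2 : ℝ) / 3)) := by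
  have hL3 : L = L ^ ((1 : ℝ) / 3) * L ^ ((2 : ℝ) / 3) := by
    rw [← Real.rpow_add hL]; norm_num
  rw [Real.mul_rpow hη hL.le]
  nth_rw 2 [hL3]
  field_simp

/-- for the Acc-DNGD-NSC linear-system matrix G(η),
(1) σ < ρ(G(η)) < σ + 4(ηL)^{1/3}, and (2) for any nonnegative eigenvector χ normalized
by χ₃ = 1 associated with ρ(G(η)), its second entry satisfies χ₂ ≤ 2η^{1/3}/L^{2/3}. -/
theorem stmt_13 (σ L η : ℝ) (hσ0 : 0 < σ) (hσ1 : σ < 1) (hL : 0 < L)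
    (hη0 : 0 < η) (hηL : η * L < 1)
    (G : Matrix (Fin 3) (Fin 3) ℝ)
    (hG : G = !![σ, 0, η; σ, σ, 2 * η; L, 2 * L, σ + 2 * η * L]) :
    (σ < specRad G ∧ specRad G < σ + 4 * (η * L) ^ ((1 : ℝ) / 3)) ∧
    (∀ χ : Fin 3 → ℝ, (∀ i, 0 ≤ χ i) → χ 2 = 1 → G.mulVec χ = specRad G • χ →
      χ 1 ≤ 2 * η ^ ((1 : ℝ) / 3) / L ^ ((2 : ℝ) / 3)) := by
  change G = accMatrix σ L η at hG
  subst hG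
  have hbounds := specRad_accMatrix_mem_Ioo hσ0 hσ1 hL hη0 hηL
  refine ⟨hbounds, fun χ hχ hχ2 heig => ?_⟩
  have hrow : L * χ 0 + 2 * L * χ 1 + (σ + 2 * η * L) = specRad (accMatrix σ L η) := by
    simpa [accMatrix, Matrix.mulVec, dotProduct, Fin.sum_univ_three, hχ2] using congrFun heig 2
  have hχ1 : 2 * L * χ 1 < 2 * L * (2 * η ^ ((1 : ℝ) / 3) / L ^ ((2 : ℝ) / 3)) :=
    calc 2 * L * χ 1 ≤ specRad (accMatrix σ L η) - σ := by
          nlinarith [mul_nonneg hL.le (hχ 0), mul_pos hη0 hL]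
      _ < 4 * (η * L) ^ ((1 : ℝ) / 3) := by linarith [hbounds.2]
      _ = 2 * L * (2 * η ^ ((1 : ℝ) / 3) / L ^ ((2 : ℝ) / 3)) := by
          rw [mul_rpow_one_third_eq hη0.le hL]; ring
  exact (lt_of_mul_lt_mul_left hχ1 (by positivity)).le
end

section
/- Let σ ∈ (0,1), L > 0, and 0 < η < √σ/(2√2·L), and let G(η) be the 3×3 real matrix with rows (σ, 0, η), (σ, σ, 2η), (L, 2L, σ+2ηL). Then: (1) the spectral radius θ(η) = ρ(G(η)) satisfies θ(η) ≥ σ + (σηL)^{1/3}; and (2) for any vector χ = (χ₁, χ₂, χ₃) with χ₃ = 1 and G(η)χ = θ(η)χ, one has χ₁ = η/(θ(η) − σ) < η/(σηL)^{1/3}. -/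
theorem Polynomial.exists_isRoot_gt_of_eval_neg {p : Polynomial ℝ} (hdeg : 0 < p.degree)
    (hlead : 0 ≤ p.leadingCoeff) {a : ℝ} (ha : p.eval a < 0) : ∃ x, a < x ∧ p.IsRoot x :=
  intermediate_value_Ioi p.continuous.continuousOn
    (p.tendsto_atTop_of_leadingCoeff_nonneg hdeg hlead) ha

theorem abs_le_specRad_of_isRoot_charpoly {M : Matrix (Fin 3) (Fin 3) ℝ} {μ : ℝ}
    (hμ : M.charpoly.IsRoot μ) : |μ| ≤ specRad M := by
  have hmem : (μ : ℂ) ∈ spectrum ℂ (M.map Complex.ofRealHom) := by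
    rw [Matrix.mem_spectrum_iff_isRoot_charpoly, Matrix.charpoly_map]
    exact hμ.map
  rw [← Real.norm_eq_abs, ← Complex.norm_real]
  exact le_csSup ((Matrix.finite_spectrum _).image _).bddAbove ⟨_, hmem, rfl⟩

def accDngdMatrix (σ L η : ℝ) : Matrix (Fin 3) (Fin 3) ℝ :=
  !![σ, 0, η; σ, σ, 2 * η; L, 2 * L, σ + 2 * η * L]

theorem eval_charpoly_accDngdMatrix (σ L η x : ℝ) :
    (accDngdMatrix σ L η).charpoly.eval (σ + x) =
      x ^ 3 - 2 * η * L * x ^ 2 - 5 * η * L * x - 2 * σ * η * L := by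
  rw [Matrix.eval_charpoly, Matrix.det_fin_three]
  simp [accDngdMatrix, Matrix.scalar_apply]
  ring

theorem exists_isRoot_charpoly_accDngdMatrix_gt {σ L η : ℝ} (hσ : 0 < σ) (hL : 0 < L)
    (hη : 0 < η) :
    ∃ θ, σ + (σ * η * L) ^ ((1 : ℝ) / 3) < θ ∧ (accDngdMatrix σ L η).charpoly.IsRoot θ := by
  set c := (σ * η * L) ^ ((1 : ℝ) / 3)
  have hc : 0 < c := by positivity
  have hc3 : c ^ 3 = σ * η * L := by
    rw [← Real.rpow_natCast, ← Real.rpow_mul (by positivity)]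
    norm_num
  have hneg : (accDngdMatrix σ L η).charpoly.eval (σ + c) < 0 := by
    have : 0 < σ * η * L := by positivity
    have : 0 < η * L * c := by positivity
    have : 0 < η * L * c ^ 2 := by positivity
    rw [eval_charpoly_accDngdMatrix, hc3]
    linarith
  exact Polynomial.exists_isRoot_gt_of_eval_neg
    (by rw [Matrix.charpoly_degree_eq_dim]; norm_num) (by rw [(Matrix.charpoly_monic _).leadingCoeff]; norm_num) hneg

theorem stmt_14_general (σ L η : ℝ) (hσ0 : 0 < σ) (hL : 0 < L)
    (hη0 : 0 < η)
    (G : Matrix (Fin 3) (Fin 3) ℝ)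
    (hG : G = !![σ, 0, η; σ, σ, 2 * η; L, 2 * L, σ + 2 * η * L]) :
    (σ + (σ * η * L) ^ ((1 : ℝ) / 3) ≤ specRad G) ∧
    (∀ χ : Fin 3 → ℝ, χ 2 = 1 → G.mulVec χ = specRad G • χ →
      χ 0 = η / (specRad G - σ) ∧ η / (specRad G - σ) < η / (σ * η * L) ^ ((1 : ℝ) / 3)) := by
  change G = accDngdMatrix σ L η at hG
  obtain ⟨θ, hθ, hroot⟩ := exists_isRoot_charpoly_accDngdMatrix_gt hσ0 hL hη0
  have hgap : (σ * η * L) ^ ((1 : ℝ) / 3) < specRad G - σ := by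
    have := (le_abs_self θ).trans (abs_le_specRad_of_isRoot_charpoly hroot)
    rw [hG]
    linarith
  have hc : 0 < (σ * η * L) ^ ((1 : ℝ) / 3) := by positivity
  refine ⟨by linarith, fun χ hχ2 hχ => ⟨?_, div_lt_div_of_pos_left hη0 hc hgap⟩⟩
  set ρ := specRad G
  have hrow := congrFun hχ 0
  simp only [Matrix.mulVec, dotProduct, hG, accDngdMatrix, Matrix.of_apply, Matrix.cons_val',
    Matrix.cons_val_fin_one, Matrix.cons_val_zero, Fin.sum_univ_three, Matrix.cons_val_one,
    zero_mul, add_zero, Matrix.cons_val, hχ2, mul_one, Pi.smul_apply, smul_eq_mul] at hrow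
  rw [eq_div_iff (by linarith)]
  linarith

/-- for the Acc-DNGD-NSC linear-system matrix G(η) with
0 < η < √σ/(2√2·L): (1) ρ(G(η)) ≥ σ + (σηL)^{1/3}; and (2) for any eigenvector χ of
ρ(G(η)) normalized by χ₃ = 1, one has χ₁ = η/(ρ(G(η)) − σ) < η/(σηL)^{1/3}. -/
theorem stmt_14 (σ L η : ℝ) (hσ0 : 0 < σ) (hσ1 : σ < 1) (hL : 0 < L)
    (hη0 : 0 < η) (hη : η < Real.sqrt σ / (2 * Real.sqrt 2 * L))
    (G : Matrix (Fin 3) (Fin 3) ℝ)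
    (hG : G = !![σ, 0, η; σ, σ, 2 * η; L, 2 * L, σ + 2 * η * L]) :
    (σ + (σ * η * L) ^ ((1 : ℝ) / 3) ≤ specRad G) ∧
    (∀ χ : Fin 3 → ℝ, χ 2 = 1 → G.mulVec χ = specRad G • χ →
      χ 0 = η / (specRad G - σ) ∧ η / (specRad G - σ) < η / (σ * η * L) ^ ((1 : ℝ) / 3)) :=
  stmt_14_general σ L η hσ0 hL hη0 G hG
end
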